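/- Let c > 0 be real and ε ∈ ℂ with |ε| = 1. On the slit punctured disc Ω define φ(w) := (1 − |w|^{2c})/|1 − w^c|², φ'(w) := (1 − |w|^{2c})/|1 − ε·w^c|², and g(w) := ε·(1 − ε̄·w̄^c)(1 − w^c)/((1 − ε·w^c)(1 − w̄^c)), where w̄^c denotes the complex conjugate of w^c (all denominators are nonzero since |w^c| < 1). Then |g| = 1 everywhere on Ω, and the gauge-equivalence relations ∂_w log φ' = g·∂_w log φ and ∂_{w̄} log φ' = ∂_{w̄} log φ − (∂_{w̄} g)/g hold on Ω. -/

import Mathlib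

/-!
With `u = w^c`, holomorphic on `Ω`, both super-potentials have the form
`φ_a = (1 - |u|²) / |1 - a u|²` (`a = 1` for `φ`, `a = ε` for `φ'`). As `1 - a u` is
holomorphic, `∂ log φ_a = ∂ log (1 - |u|²) - ∂ log (1 - a u)`, so `∂ log φ' - ∂ log φ = ∂ log h`
for `h = (1 - u) / (1 - ε u)`. The gauge is `g = ε h / h̄`, hence `|g| = |ε| = 1` and
`∂̄ g / g = -conj (∂ log h)`; since the `φ_a` are real, `∂̄ log φ_a = conj (∂ log φ_a)`, which gives
the third relation. The second one is rational algebra once `ε (1 - ε̄ ū) = ε - ū` is used.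
-/

open Complex ComplexConjugate

noncomputable section

/-- Wirtinger derivative ∂_z f = (1/2)(∂_t f − i ∂_r f). -/
def wdz (f : ℂ → ℂ) (z : ℂ) : ℂ :=
  (2:ℂ)⁻¹ * (fderiv ℝ f z 1 - Complex.I * fderiv ℝ f z Complex.I)

/-- Wirtinger derivative ∂_z̄ f = (1/2)(∂_t f + i ∂_r f). -/
def wdzbar (f : ℂ → ℂ) (z : ℂ) : ℂ :=
  (2:ℂ)⁻¹ * (fderiv ℝ f z 1 + Complex.I * fderiv ℝ f z Complex.I)

/-- A real-valued function regarded as complex-valued. -/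
def cre (φ : ℂ → ℝ) : ℂ → ℂ := fun z => (φ z : ℂ)

/-- ∂_z log φ := (∂_z φ)/φ for positive real φ. -/
def dzlog (φ : ℂ → ℝ) (z : ℂ) : ℂ := wdz (cre φ) z / (φ z : ℂ)

/-- ∂_z̄ log φ := (∂_z̄ φ)/φ for positive real φ. -/
def dzbarlog (φ : ℂ → ℝ) (z : ℂ) : ℂ := wdzbar (cre φ) z / (φ z : ℂ)

/-- Flat Laplacian ∂_t² + ∂_r² on ℂ ≅ ℝ², where z = t + ir. -/
def lap2 (φ : ℂ → ℝ) (z : ℂ) : ℝ :=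
  fderiv ℝ (fun w => fderiv ℝ φ w 1) z 1 +
  fderiv ℝ (fun w => fderiv ℝ φ w Complex.I) z Complex.I

/-- The slit punctured disc: the open unit disc minus the origin and the nonnegative
real axis. -/
def Omega : Set ℂ :=
  {w : ℂ | 0 < ‖w‖ ∧ ‖w‖ < 1 ∧ ¬(w.im = 0 ∧ 0 ≤ w.re)}

/-- The argument normalized to lie in (0, 2π) (on Ω). -/
def argTwoPi (w : ℂ) : ℝ := if 0 < w.arg then w.arg else w.arg + 2 * Real.pi

/-- The branch of the complex logarithm on Ω with argument in (0, 2π). -/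
def Lbr (w : ℂ) : ℂ := (Real.log (‖w‖) : ℂ) + (argTwoPi w : ℂ) * Complex.I

/-- w^c := exp(c·L(w)) for the branch L with argument in (0, 2π). -/
def wpow (c : ℝ) (w : ℂ) : ℂ := Complex.exp ((c : ℂ) * Lbr w)

/-- The super-potential φ_c(w) = (1 − |w|^{2c})/|1 − w^c|². -/
def phiC (c : ℝ) (w : ℂ) : ℝ :=
  (1 - ‖w‖ ^ (2*c)) / Complex.normSq (1 - wpow c w)
/-- The super-potential φ' obtained from φ_c after continuing once around the origin. -/
def phiC' (c : ℝ) (ε : ℂ) (w : ℂ) : ℝ :=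
  (1 - ‖w‖ ^ (2*c)) / Complex.normSq (1 - ε * wpow c w)

/-- The gauge transformation g = ε(1 − ε̄w̄^c)(1 − w^c)/((1 − εw^c)(1 − w̄^c)). -/
def gauge17 (c : ℝ) (ε : ℂ) (w : ℂ) : ℂ :=
  ε * (1 - conj ε * conj (wpow c w)) * (1 - wpow c w) /
    ((1 - ε * wpow c w) * (1 - conj (wpow c w)))

open Filter Topology

section Wirtinger

variable {f g : ℂ → ℂ} {w : ℂ}

theorem Filter.EventuallyEq.wdz_eq (h : f =ᶠ[𝓝 w] g) : wdz f w = wdz g w := by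
  rw [wdz, wdz, h.fderiv_eq]

theorem fderiv_real_apply_of_differentiableAt (hf : DifferentiableAt ℂ f w) (v : ℂ) :
    fderiv ℝ f w v = v * deriv f w := by
  rw [hf.fderiv_restrictScalars ℝ, ContinuousLinearMap.coe_restrictScalars',
    ← fderiv_apply_one_eq_deriv, ← smul_eq_mul, ← map_smul, smul_eq_mul, mul_one]

theorem DifferentiableAt.wdz_eq_deriv (hf : DifferentiableAt ℂ f w) : wdz f w = deriv f w := by
  simp only [wdz, fderiv_real_apply_of_differentiableAt hf]
  linear_combination (-2⁻¹ * deriv f w) * I_mul_I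

theorem DifferentiableAt.wdzbar_eq_zero (hf : DifferentiableAt ℂ f w) : wdzbar f w = 0 := by
  simp only [wdzbar, fderiv_real_apply_of_differentiableAt hf]
  linear_combination (2⁻¹ * deriv f w) * I_mul_I

theorem DifferentiableAt.conj (hf : DifferentiableAt ℝ f w) :
    DifferentiableAt ℝ (fun z => conj (f z)) w :=
  hf.star

theorem wdz_conj : wdz (fun z => conj (f z)) w = conj (wdzbar f w) := by
  have h : fderiv ℝ (fun z => conj (f z)) w = (conjCLE : ℂ →L[ℝ] ℂ).comp (fderiv ℝ f w) :=
    conjCLE.comp_fderiv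
  simp only [wdz, wdzbar, h, ContinuousLinearMap.comp_apply, map_mul, map_add, conj_I,
    map_inv₀, map_ofNat]
  simp only [ContinuousLinearEquiv.coe_coe, conjCLE_apply]
  ring

theorem wdzbar_conj : wdzbar (fun z => conj (f z)) w = conj (wdz f w) := by
  simpa using (congrArg conj (wdz_conj (f := fun z => conj (f z)) (w := w))).symm

theorem wdz_const_sub (k : ℂ) : wdz (fun z => k - f z) w = -wdz f w := by
  simp only [wdz, fderiv_const_sub, neg_apply]
  ring

theorem wdz_mul (hf : DifferentiableAt ℝ f w) (hg : DifferentiableAt ℝ g w) :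
    wdz (fun z => f z * g z) w = f w * wdz g w + g w * wdz f w := by
  simp only [wdz, fderiv_fun_mul hf hg, add_apply, smul_apply, smul_eq_mul]
  ring

theorem wdz_inv (hf : DifferentiableAt ℝ f w) (hf0 : f w ≠ 0) :
    wdz (fun z => (f z)⁻¹) w = -(f w ^ 2)⁻¹ * wdz f w := by
  have hinv : DifferentiableAt ℂ (fun x : ℂ => x⁻¹) (f w) := differentiableAt_inv hf0
  have h : fderiv ℝ (fun z => (f z)⁻¹) w =
      (fderiv ℝ (fun x : ℂ => x⁻¹) (f w)).comp (fderiv ℝ f w) :=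
    fderiv_comp w (hinv.restrictScalars ℝ) hf
  simp only [wdz, h, ContinuousLinearMap.comp_apply,
    fderiv_real_apply_of_differentiableAt hinv, deriv_inv]
  ring

def logWdz (f : ℂ → ℂ) (z : ℂ) : ℂ := wdz f z / f z

theorem dzlog_eq_logWdz (φ : ℂ → ℝ) (z : ℂ) : dzlog φ z = logWdz (cre φ) z := rfl

theorem Filter.EventuallyEq.logWdz_eq (h : f =ᶠ[𝓝 w] g) : logWdz f w = logWdz g w := by
  rw [logWdz, logWdz, h.wdz_eq, h.eq_of_nhds]

theorem logWdz_mul (hf : DifferentiableAt ℝ f w) (hg : DifferentiableAt ℝ g w)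
    (hf0 : f w ≠ 0) (hg0 : g w ≠ 0) :
    logWdz (fun z => f z * g z) w = logWdz f w + logWdz g w := by
  simp only [logWdz, wdz_mul hf hg]
  field_simp
  ring

theorem logWdz_div (hf : DifferentiableAt ℝ f w) (hg : DifferentiableAt ℝ g w)
    (hf0 : f w ≠ 0) (hg0 : g w ≠ 0) :
    logWdz (fun z => f z / g z) w = logWdz f w - logWdz g w := by
  simp only [div_eq_mul_inv]
  rw [logWdz_mul (g := fun z => (g z)⁻¹) hf (hg.inv hg0) hf0 (inv_ne_zero hg0)]
  simp only [logWdz, wdz_inv hg hg0]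
  field_simp
  ring

theorem DifferentiableAt.logWdz_eq_logDeriv (hf : DifferentiableAt ℂ f w) :
    logWdz f w = logDeriv f w := by
  rw [logWdz, logDeriv_apply, hf.wdz_eq_deriv]

theorem DifferentiableAt.logWdz_conj (hf : DifferentiableAt ℂ f w) :
    logWdz (fun z => conj (f z)) w = 0 := by
  rw [logWdz, wdz_conj, hf.wdzbar_eq_zero, map_zero, zero_div]

theorem wdzbar_div_self_eq_conj_logWdz_conj (f : ℂ → ℂ) (w : ℂ) :
    wdzbar f w / f w = conj (logWdz (fun z => conj (f z)) w) := by
  rw [logWdz, map_div₀, wdz_conj, conj_conj, conj_conj]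

theorem dzbarlog_eq_conj_dzlog (φ : ℂ → ℝ) (z : ℂ) : dzbarlog φ z = conj (dzlog φ z) := by
  have hφ : (fun z => conj (cre φ z)) = cre φ := funext fun z => conj_ofReal (φ z)
  rw [dzbarlog, dzlog, map_div₀, conj_ofReal, ← wdzbar_conj, hφ]

end Wirtinger

theorem dzlog_eq_of_eventuallyEq_div_normSq {φ : ℂ → ℝ} {u : ℂ → ℂ} {a w : ℂ}
    (hu : DifferentiableAt ℂ u w) (hN : 1 - u w * conj (u w) ≠ 0) (hP : 1 - a * u w ≠ 0)
    (hφ : φ =ᶠ[𝓝 w] fun z => (1 - normSq (u z)) / normSq (1 - a * u z)) :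
    dzlog φ w = -(conj (u w) * deriv u w) / (1 - u w * conj (u w)) -
      logDeriv (fun z => 1 - a * u z) w := by
  have huR : DifferentiableAt ℝ u w := hu.restrictScalars ℝ
  have hPR : DifferentiableAt ℂ (fun z => 1 - a * u z) w :=
    (differentiableAt_const 1).sub (hu.const_mul a)
  have hP' : conj (1 - a * u w) ≠ 0 := (map_ne_zero conj).mpr hP
  have hcre : cre φ =ᶠ[𝓝 w] fun z =>
      (1 - u z * conj (u z)) / ((1 - a * u z) * conj (1 - a * u z)) :=
    hφ.mono fun z hz => by simp only [cre, hz, mul_conj]; push_cast; rfl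
  have hlogN : logWdz (fun z => 1 - u z * conj (u z)) w =
      -(conj (u w) * deriv u w) / (1 - u w * conj (u w)) := by
    rw [logWdz, wdz_const_sub, wdz_mul huR huR.conj, wdz_conj, hu.wdzbar_eq_zero,
      hu.wdz_eq_deriv]
    simp
  have hNR : DifferentiableAt ℝ (fun z => 1 - u z * conj (u z)) w :=
    (differentiableAt_const 1).sub (huR.mul huR.conj)
  have hDR : DifferentiableAt ℝ (fun z => (1 - a * u z) * conj (1 - a * u z)) w :=
    (hPR.restrictScalars ℝ).mul (hPR.restrictScalars ℝ).conj
  rw [dzlog_eq_logWdz, hcre.logWdz_eq, logWdz_div hNR hDR hN (mul_ne_zero hP hP'),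
    logWdz_mul (hPR.restrictScalars ℝ) (hPR.restrictScalars ℝ).conj hP hP',
    hlogN, hPR.logWdz_eq_logDeriv, hPR.logWdz_conj, add_zero]

theorem wdzbar_div_self_gauge {p q : ℂ → ℂ} {w : ℂ} {ε : ℂ} (hε : ε ≠ 0)
    (hp : DifferentiableAt ℂ p w) (hq : DifferentiableAt ℂ q w) (hp0 : p w ≠ 0) (hq0 : q w ≠ 0) :
    wdzbar (fun z => ε * conj (q z) * p z / (q z * conj (p z))) w /
        (ε * conj (q w) * p w / (q w * conj (p w))) =
      conj (logDeriv q w - logDeriv p w) := by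
  have hconj : (fun z => conj (ε * conj (q z) * p z / (q z * conj (p z)))) =
      fun z => conj ε * q z * conj (p z) / (conj (q z) * p z) := by
    funext z
    simp only [map_div₀, map_mul, conj_conj]
  have hεq : DifferentiableAt ℂ (fun z => conj ε * q z) w := hq.const_mul _
  have hεq0 : conj ε * q w ≠ 0 := mul_ne_zero ((map_ne_zero conj).mpr hε) hq0
  have hp0' : conj (p w) ≠ 0 := (map_ne_zero conj).mpr hp0
  have hq0' : conj (q w) ≠ 0 := (map_ne_zero conj).mpr hq0
  have hpR := hp.restrictScalars ℝ
  have hqR := hq.restrictScalars ℝ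
  have hnum : DifferentiableAt ℝ (fun z => conj ε * q z * conj (p z)) w :=
    (hεq.restrictScalars ℝ).mul hpR.conj
  have hden : DifferentiableAt ℝ (fun z => conj (q z) * p z) w := hqR.conj.mul hpR
  rw [wdzbar_div_self_eq_conj_logWdz_conj, hconj,
    logWdz_div hnum hden (mul_ne_zero hεq0 hp0') (mul_ne_zero hq0' hp0),
    logWdz_mul (hεq.restrictScalars ℝ) hpR.conj hεq0 hp0', logWdz_mul hqR.conj hpR hq0' hp0,
    hεq.logWdz_eq_logDeriv, hp.logWdz_eq_logDeriv, hp.logWdz_conj, hq.logWdz_conj,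
    logDeriv_const_mul _ _ ((map_ne_zero conj).mpr hε), add_zero, zero_add]

theorem Lbr_eq_log_neg {w : ℂ} (hw : -w ∈ slitPlane) :
    Lbr w = log (-w) + Real.pi * I := by
  have hw' : w.re < 0 ∨ w.im ≠ 0 := by simpa [mem_slitPlane_iff] using hw
  have harg : argTwoPi w = arg (-w) + Real.pi := by
    by_cases hpos : 0 < arg w
    · have him : 0 < w.im ∨ w.im = 0 ∧ w.re < 0 := by
        have := arg_nonneg_iff.mp hpos.le
        rcases hw' with h | h
        · rcases this.lt_or_eq with h' | h'
          · exact Or.inl h'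
          · exact Or.inr ⟨h'.symm, h⟩
        · exact Or.inl (lt_of_le_of_ne this h.symm)
      rw [argTwoPi, if_pos hpos, arg_neg_eq_arg_sub_pi_iff.mpr him]
      ring
    · have him : w.im < 0 := by
        refine arg_neg_iff.mp (lt_of_le_of_ne (not_lt.mp hpos) fun h0 => ?_)
        have := arg_eq_zero_iff.mp h0
        rcases hw' with h | h
        · linarith [this.1]
        · exact h this.2
      rw [argTwoPi, if_neg hpos, arg_neg_eq_arg_add_pi_of_im_neg him]
      ring
  rw [Lbr, Complex.log, norm_neg, harg]
  push_cast
  ring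

theorem differentiableAt_wpow (c : ℝ) {w : ℂ} (hw : -w ∈ slitPlane) :
    DifferentiableAt ℂ (wpow c) w := by
  have hnhds : ∀ᶠ z in 𝓝 w, -z ∈ slitPlane :=
    (continuous_neg.tendsto w).eventually (isOpen_slitPlane.mem_nhds hw)
  have heq : (fun z => exp (c * (log (-z) + Real.pi * I))) =ᶠ[𝓝 w] wpow c :=
    hnhds.mono fun z hz => by rw [wpow, Lbr_eq_log_neg hz]
  refine DifferentiableAt.congr_of_eventuallyEq ?_ heq.symm
  exact (((differentiableAt_id.neg.clog hw).add_const _).const_mul _).cexp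

theorem norm_wpow (c : ℝ) {w : ℂ} (hw : w ≠ 0) : ‖wpow c w‖ = ‖w‖ ^ c := by
  rw [wpow, norm_exp, Real.rpow_def_of_pos (norm_pos_iff.mpr hw), mul_comm]
  simp [Lbr]

theorem phiC'_eq_div_normSq (c : ℝ) (ε : ℂ) {w : ℂ} (hw : w ≠ 0) :
    phiC' c ε w = (1 - normSq (wpow c w)) / normSq (1 - ε * wpow c w) := by
  rw [phiC', normSq_eq_norm_sq (wpow c w), norm_wpow c hw, ← Real.rpow_natCast,
    ← Real.rpow_mul (norm_nonneg w), Nat.cast_ofNat, mul_comm c]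

theorem phiC_eq_phiC'_one (c : ℝ) : phiC c = phiC' c 1 := by
  funext w
  rw [phiC, phiC', one_mul]

theorem ne_zero_of_mem_Omega {w : ℂ} (hw : w ∈ Omega) : w ≠ 0 :=
  norm_pos_iff.mp hw.1

theorem neg_mem_slitPlane_of_mem_Omega {w : ℂ} (hw : w ∈ Omega) : -w ∈ slitPlane := by
  obtain ⟨-, -, hax⟩ := hw
  rw [mem_slitPlane_iff, neg_re, neg_im, neg_pos, ne_eq, neg_eq_zero]
  by_cases him : w.im = 0
  · exact Or.inl (not_le.mp fun h => hax ⟨him, h⟩)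
  · exact Or.inr him

theorem norm_wpow_lt_one {c : ℝ} (hc : 0 < c) {w : ℂ} (hw : w ∈ Omega) : ‖wpow c w‖ < 1 := by
  rw [norm_wpow c (ne_zero_of_mem_Omega hw)]
  exact Real.rpow_lt_one (norm_nonneg w) hw.2.1 hc

theorem one_sub_ne_zero_of_norm_lt_one {z : ℂ} (hz : ‖z‖ < 1) : 1 - z ≠ 0 :=
  sub_ne_zero.mpr fun h => by simp [← h] at hz

theorem one_sub_mul_conj_ne_zero {z : ℂ} (hz : ‖z‖ < 1) : 1 - z * conj z ≠ 0 :=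
  one_sub_ne_zero_of_norm_lt_one (by rw [norm_mul, norm_conj]; nlinarith [norm_nonneg z])

theorem dzlog_phiC' {c : ℝ} (hc : 0 < c) {a w : ℂ} (ha : ‖a‖ ≤ 1) (hw : w ∈ Omega) :
    dzlog (phiC' c a) w =
      -(conj (wpow c w) * deriv (wpow c) w) / (1 - wpow c w * conj (wpow c w)) -
        logDeriv (fun z => 1 - a * wpow c z) w := by
  have hu := norm_wpow_lt_one hc hw
  refine dzlog_eq_of_eventuallyEq_div_normSq (differentiableAt_wpow c
    (neg_mem_slitPlane_of_mem_Omega hw)) (one_sub_mul_conj_ne_zero hu)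
    (one_sub_ne_zero_of_norm_lt_one ?_) ?_
  · rw [norm_mul]
    nlinarith [norm_nonneg (wpow c w), norm_nonneg a]
  · filter_upwards [eventually_ne_nhds (ne_zero_of_mem_Omega hw)] with z hz
    exact phiC'_eq_div_normSq c a hz

theorem gauge17_eq (c : ℝ) (ε : ℂ) : gauge17 c ε = fun z =>
    ε * conj (1 - ε * wpow c z) * (1 - wpow c z) / ((1 - ε * wpow c z) * conj (1 - wpow c z)) := by
  funext z
  simp only [gauge17, map_sub, map_one, map_mul]

-- With `v = conj u`, `e = conj ε` and `d = ∂u`, this is `∂ log φ' = g ∂ log φ`.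
theorem sub_div_eq_gauge_mul {K : Type*} [Field K] {ε e u v d : K} (hε : ε * e = 1)
    (hp : 1 - u ≠ 0) (hq : 1 - ε * u ≠ 0) (hv : 1 - v ≠ 0) (hN : 1 - u * v ≠ 0) :
    -(v * d) / (1 - u * v) - -(ε * d) / (1 - ε * u) =
      ε * (1 - e * v) * (1 - u) / ((1 - ε * u) * (1 - v)) *
        (-(v * d) / (1 - u * v) - -d / (1 - u)) := by
  rw [show ε * (1 - e * v) = ε - v by linear_combination (-v) * hε, div_sub_div _ _ hN hq,
    div_sub_div _ _ hN hp, div_mul_div_comm,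
    div_eq_div_iff (mul_ne_zero hN hq) (mul_ne_zero (mul_ne_zero hq hv) (mul_ne_zero hN hp))]
  ring

/-- On the slit punctured disc Ω the gauge transformation g has |g| = 1 and relates the
super-potentials φ and φ' by ∂_w log φ' = g·∂_w log φ and
∂_w̄ log φ' = ∂_w̄ log φ − (∂_w̄ g)/g. -/
theorem gauge_relates_superpotentials (c : ℝ) (hc : 0 < c) (ε : ℂ)
    (hε : ‖ε‖ = 1) :
    ∀ w ∈ Omega,
      ‖gauge17 c ε w‖ = 1 ∧
      dzlog (phiC' c ε) w = gauge17 c ε w * dzlog (phiC c) w ∧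
      dzbarlog (phiC' c ε) w =
        dzbarlog (phiC c) w - wdzbar (gauge17 c ε) w / gauge17 c ε w := by
  intro w hw
  have hu := differentiableAt_wpow c (neg_mem_slitPlane_of_mem_Omega hw)
  have hu1 := norm_wpow_lt_one hc hw
  have hp : 1 - wpow c w ≠ 0 := one_sub_ne_zero_of_norm_lt_one hu1
  have hq : 1 - ε * wpow c w ≠ 0 :=
    one_sub_ne_zero_of_norm_lt_one (by rwa [norm_mul, hε, one_mul])
  have hφ := dzlog_phiC' hc (norm_one (α := ℂ)).le hw
  simp only [← phiC_eq_phiC'_one, one_mul] at hφ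
  have hφ' := dzlog_phiC' hc hε.le hw
  refine ⟨?_, ?_, ?_⟩
  · rw [gauge17_eq, norm_div, norm_mul, norm_mul, norm_mul, norm_conj, norm_conj, hε, one_mul,
      mul_comm, div_self (mul_ne_zero (norm_ne_zero_iff.mpr hp) (norm_ne_zero_iff.mpr hq))]
  · rw [hφ, hφ', logDeriv_apply, logDeriv_apply, deriv_const_sub, deriv_const_sub,
      deriv_const_mul _ hu]
    exact sub_div_eq_gauge_mul (by rw [mul_conj, normSq_eq_norm_sq, hε, one_pow, ofReal_one])
      hp hq (one_sub_ne_zero_of_norm_lt_one (by rwa [norm_conj])) (one_sub_mul_conj_ne_zero hu1)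
  · rw [gauge17_eq, dzbarlog_eq_conj_dzlog, dzbarlog_eq_conj_dzlog, hφ, hφ',
      wdzbar_div_self_gauge (norm_ne_zero_iff.mp (by simp [hε]))
        (hu.const_sub 1) ((hu.const_mul ε).const_sub 1) hp hq]
    simp only [map_sub]
    ring
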